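/- arXiv:1801.06893 — 2 statements merged into one kernel-verified Lean document; each statement's English description precedes it below -/
import Mathlib

section
/- Let B be a 2n×2n unitary matrix such that B·J_n is skew-symmetric, i.e. (B·J_n)ᵀ = −B·J_n. Suppose B = A_k·A_{k−1}⋯A_1 where A_j = A_{(θ_j,x_j)} with unit vectors x_j ∈_min ℂ^{m_j}, m_1 < m_2 < ⋯ < m_k, and each θ_j not an integer multiple of 2π. Then k is even; and if k ≥ 2, then m_1 is odd, m_2 = m_1 + 1, and A_2 = J_n·A_1ᵀ·J_n⁻¹, i.e. A_2 = A_{(θ_1, 𝐣x_1)}. -/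
open Matrix Complex

/-- The pseudo-rotation `A_{(θ,x)} = Iₙ − (1 − e^{iθ})·x·x̄ᵀ`. -/
noncomputable def pseudoRot {n : ℕ} (θ : ℝ) (x : Fin n → ℂ) : Matrix (Fin n) (Fin n) ℂ :=
  1 - (1 - Complex.exp (θ * Complex.I)) • Matrix.vecMulVec x (star x)

/-- `x` minimally belongs to `ℂ^k` (1-based coordinates `k+1,…,n` vanish and the
`k`-th coordinate is nonzero). -/
def minBelongs {n : ℕ} (x : Fin n → ℂ) (k : ℕ) : Prop :=
  (∀ i : Fin n, k ≤ (i : ℕ) → x i = 0) ∧ ∃ i : Fin n, (i : ℕ) + 1 = k ∧ x i ≠ 0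

/-- The `2n × 2n` block-diagonal matrix with `2 × 2` diagonal blocks `[[0,1],[-1,0]]`. -/
def Jmat (n : ℕ) : Matrix (Fin (2 * n)) (Fin (2 * n)) ℂ :=
  Matrix.of fun i j =>
    if (i : ℕ) % 2 = 0 ∧ (j : ℕ) = (i : ℕ) + 1 then 1
    else if (j : ℕ) % 2 = 0 ∧ (i : ℕ) = (j : ℕ) + 1 then -1 else 0

/-- The quaternionic structure map `𝐣x := J_n · x̄` on `ℂ^{2n}`. -/
noncomputable def jmap {n : ℕ} (x : Fin (2 * n) → ℂ) : Fin (2 * n) → ℂ :=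
  Jmat n *ᵥ star x

namespace Stmt16Aux

/-! ### Complex exponential helpers -/

lemma exp_ne_one {t : ℝ} (h : ¬ ∃ z : ℤ, t = 2 * Real.pi * z) :
    Complex.exp (t * I) ≠ 1 := by
  intro he
  rw [Complex.exp_eq_one_iff] at he
  obtain ⟨z, hz⟩ := he
  apply h
  refine ⟨z, ?_⟩
  have h2 : (t : ℂ) * I = ((2 * Real.pi * z : ℝ) : ℂ) * I := by
    rw [hz]; push_cast; ring
  have h3 : (t : ℂ) = ((2 * Real.pi * z : ℝ) : ℂ) := mul_right_cancel₀ Complex.I_ne_zero h2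
  exact_mod_cast h3

lemma star_ne_zero' {z : ℂ} (h : z ≠ 0) : star z ≠ 0 :=
  fun hh => h (star_eq_zero.mp hh)

lemma exp_neg' (t : ℝ) : Complex.exp ((-t : ℝ) * I) = (Complex.exp (t * I))⁻¹ := by
  push_cast
  rw [neg_mul, Complex.exp_neg]

/-! ### vecMulVec helpers -/

lemma vmv_mulVec {N : ℕ} (v u w : Fin N → ℂ) :
    vecMulVec v u *ᵥ w = (u ⬝ᵥ w) • v := by
  funext i
  simp only [Matrix.mulVec, dotProduct, vecMulVec_apply, Pi.smul_apply, smul_eq_mul,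
    Finset.sum_mul]
  exact Finset.sum_congr rfl fun j _ => by ring

lemma mul_vmv {N : ℕ} (M : Matrix (Fin N) (Fin N) ℂ) (a b : Fin N → ℂ) :
    M * vecMulVec a b = vecMulVec (M *ᵥ a) b := by
  ext i j
  simp only [Matrix.mul_apply, vecMulVec_apply, Matrix.mulVec, dotProduct, Finset.sum_mul]
  exact Finset.sum_congr rfl fun c _ => by ring

lemma vmv_mul {N : ℕ} (M : Matrix (Fin N) (Fin N) ℂ) (a b : Fin N → ℂ) :
    vecMulVec a b * M = vecMulVec a (b ᵥ* M) := by
  ext i j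
  simp only [Matrix.mul_apply, vecMulVec_apply, Matrix.vecMul, dotProduct, Finset.mul_sum]
  exact Finset.sum_congr rfl fun c _ => by ring

lemma vmv_transpose {N : ℕ} (a b : Fin N → ℂ) :
    (vecMulVec a b)ᵀ = vecMulVec b a := by
  ext i j
  simp only [transpose_apply, vecMulVec_apply]
  ring

lemma vmv_unit_smul {N : ℕ} (a : ℂ) (u : Fin N → ℂ) (h : a * star a = 1) :
    vecMulVec (a • u) (star (a • u)) = vecMulVec u (star u) := by
  ext i j
  simp only [vecMulVec_apply, Pi.smul_apply, smul_eq_mul, Pi.star_apply, star_mul']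
  calc a * u i * (star a * star (u j)) = (a * star a) * (u i * star (u j)) := by ring
  _ = u i * star (u j) := by rw [h]; ring

/-! ### pseudoRot helpers -/

lemma pr_mulVec {N : ℕ} (t : ℝ) (v w : Fin N → ℂ) :
    pseudoRot t v *ᵥ w = w - ((1 - Complex.exp (t * I)) * (star v ⬝ᵥ w)) • v := by
  rw [pseudoRot, Matrix.sub_mulVec, Matrix.one_mulVec, smul_mulVec, vmv_mulVec,
    smul_smul]

lemma pr_transpose {N : ℕ} (t : ℝ) (v : Fin N → ℂ) :
    (pseudoRot t v)ᵀ = pseudoRot t (star v) := by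
  rw [pseudoRot, pseudoRot, transpose_sub, transpose_one, transpose_smul, vmv_transpose,
    star_star]

lemma pr_conjTranspose {N : ℕ} (t : ℝ) (v : Fin N → ℂ) :
    (pseudoRot t v)ᴴ = pseudoRot (-t) v := by
  rw [pseudoRot, pseudoRot, conjTranspose_sub, conjTranspose_one, conjTranspose_smul]
  congr 1
  congr 1
  · rw [exp_neg', Complex.star_def, map_sub, _root_.map_one, ← Complex.exp_conj, _root_.map_mul,
      Complex.conj_ofReal, Complex.conj_I, mul_neg, Complex.exp_neg]
  · ext i j
    simp only [conjTranspose_apply, vecMulVec_apply, Pi.star_apply, star_mul', star_star]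
    ring

lemma pr_congr {N : ℕ} {t s : ℝ} (v : Fin N → ℂ)
    (h : Complex.exp (t * I) = Complex.exp (s * I)) : pseudoRot t v = pseudoRot s v := by
  rw [pseudoRot, pseudoRot, h]

lemma one_sub_smul_mul {N : ℕ} (a b : ℂ) (V : Matrix (Fin N) (Fin N) ℂ) (hVV : V * V = V) :
    (1 - a • V) * (1 - b • V) = 1 - (a + b - a * b) • V := by
  rw [sub_mul, one_mul, mul_sub, mul_one, Matrix.smul_mul, Matrix.mul_smul, smul_smul, hVV,
    sub_smul, add_smul]
  abel

lemma pr_mul_inv {N : ℕ} (t : ℝ) {v : Fin N → ℂ} (h : star v ⬝ᵥ v = 1) :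
    pseudoRot t v * pseudoRot (-t) v = 1 := by
  have hVV : vecMulVec v (star v) * vecMulVec v (star v) = vecMulVec v (star v) := by
    rw [mul_vmv, vmv_mulVec, h, one_smul]
  rw [pseudoRot, pseudoRot, one_sub_smul_mul _ _ _ hVV]
  have hco : (1 - Complex.exp ((t:ℝ) * I)) + (1 - Complex.exp ((-t:ℝ) * I))
      - (1 - Complex.exp ((t:ℝ) * I)) * (1 - Complex.exp ((-t:ℝ) * I)) = 0 := by
    rw [exp_neg']
    have hne : Complex.exp ((t:ℝ) * I) ≠ 0 := Complex.exp_ne_zero _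
    field_simp
    ring
  rw [hco, zero_smul, sub_zero]

lemma pr_inv_mul {N : ℕ} (t : ℝ) {v : Fin N → ℂ} (h : star v ⬝ᵥ v = 1) :
    pseudoRot (-t) v * pseudoRot t v = 1 := by
  have := pr_mul_inv (-t) h
  rwa [show pseudoRot (-(-t)) v = pseudoRot t v from by norm_num] at this

lemma pr_H_mul {N : ℕ} (t : ℝ) {v : Fin N → ℂ} (h : star v ⬝ᵥ v = 1) :
    (pseudoRot t v)ᴴ * pseudoRot t v = 1 := by
  rw [pr_conjTranspose]; exact pr_inv_mul t h

lemma pr_mul_H {N : ℕ} (t : ℝ) {v : Fin N → ℂ} (h : star v ⬝ᵥ v = 1) :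
    pseudoRot t v * (pseudoRot t v)ᴴ = 1 := by
  rw [pr_conjTranspose]; exact pr_mul_inv t h

lemma pr_smul_eq {N : ℕ} (t : ℝ) (a : ℂ) (v : Fin N → ℂ) (h : a * star a = 1) :
    pseudoRot t (a • v) = pseudoRot t v := by
  rw [pseudoRot, pseudoRot, vmv_unit_smul a v h]

lemma pr_neg {N : ℕ} (t : ℝ) (v : Fin N → ℂ) : pseudoRot t (-v) = pseudoRot t v := by
  have := pr_smul_eq t (-1 : ℂ) v (by simp)
  simpa using this

/-! ### products of pseudo-rotations -/

noncomputable def Pprod {N : ℕ} (θf : ℕ → ℝ) (xf : ℕ → Fin N → ℂ) (k : ℕ) :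
    Matrix (Fin N) (Fin N) ℂ :=
  (List.ofFn fun j : Fin k => pseudoRot (θf (k - 1 - (j : ℕ))) (xf (k - 1 - (j : ℕ)))).prod

lemma Pprod_zero {N : ℕ} (θf : ℕ → ℝ) (xf : ℕ → Fin N → ℂ) : Pprod θf xf 0 = 1 := by
  simp [Pprod]

lemma Pprod_succ {N : ℕ} (θf : ℕ → ℝ) (xf : ℕ → Fin N → ℂ) (k : ℕ) :
    Pprod θf xf (k + 1) = pseudoRot (θf k) (xf k) * Pprod θf xf k := by
  have e : ∀ a b : ℕ, a = b → pseudoRot (θf a) (xf a) = pseudoRot (θf b) (xf b) :=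
    fun a b h => by rw [h]
  rw [Pprod, List.ofFn_succ, List.prod_cons, Pprod]
  congr 1
  congr 1
  congr 1
  funext j
  exact e _ _ (by simp only [Fin.val_succ]; omega)

lemma Pprod_fix {N : ℕ} (θf : ℕ → ℝ) (xf : ℕ → Fin N → ℂ) (k : ℕ) (r : Fin N)
    (h : ∀ j < k, xf j r = 0) : Pprod θf xf k *ᵥ Pi.single r 1 = Pi.single r 1 := by
  induction k with
  | zero => rw [Pprod_zero, Matrix.one_mulVec]
  | succ k ih =>
    rw [Pprod_succ, ← mulVec_mulVec, ih (fun j hj => h j (by omega)), pr_mulVec]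
    have h0 : star (xf k) ⬝ᵥ Pi.single r (1:ℂ) = 0 := by
      rw [dotProduct_single, mul_one, Pi.star_apply, h k (by omega), star_zero]
    rw [h0, mul_zero, zero_smul, sub_zero]

lemma Pprod_coord {N : ℕ} (θf : ℕ → ℝ) (xf : ℕ → Fin N → ℂ) (k : ℕ) (r : Fin N)
    (h : ∀ j < k, xf j r = 0) (v : Fin N → ℂ) : (Pprod θf xf k *ᵥ v) r = v r := by
  induction k with
  | zero => rw [Pprod_zero, Matrix.one_mulVec]
  | succ k ih =>
    rw [Pprod_succ, ← mulVec_mulVec, pr_mulVec]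
    simp only [Pi.sub_apply, Pi.smul_apply, smul_eq_mul, h k (by omega), mul_zero, sub_zero]
    exact ih (fun j hj => h j (by omega))

lemma PprodT_fix {N : ℕ} (θf : ℕ → ℝ) (xf : ℕ → Fin N → ℂ) (k : ℕ) (r : Fin N)
    (h : ∀ j < k, xf j r = 0) : (Pprod θf xf k)ᵀ *ᵥ Pi.single r 1 = Pi.single r 1 := by
  induction k with
  | zero => rw [Pprod_zero, transpose_one, Matrix.one_mulVec]
  | succ k ih =>
    rw [Pprod_succ, transpose_mul, ← mulVec_mulVec, pr_transpose, pr_mulVec]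
    have h0 : star (star (xf k)) ⬝ᵥ Pi.single r (1:ℂ) = 0 := by
      rw [star_star, dotProduct_single, mul_one, h k (by omega)]
    rw [h0, mul_zero, zero_smul, sub_zero]
    exact ih (fun j hj => h j (by omega))

lemma Pprod_mul_H {N : ℕ} (θf : ℕ → ℝ) (xf : ℕ → Fin N → ℂ) (k : ℕ)
    (h : ∀ j < k, star (xf j) ⬝ᵥ xf j = 1) :
    Pprod θf xf k * (Pprod θf xf k)ᴴ = 1 := by
  induction k with
  | zero => simp [Pprod_zero]
  | succ k ih =>
    rw [Pprod_succ, conjTranspose_mul, mul_assoc, ← mul_assoc (Pprod θf xf k),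
      ih (fun j hj => h j (by omega)), one_mul]
    exact pr_mul_H _ (h k (by omega))

lemma Pprod_H_mul {N : ℕ} (θf : ℕ → ℝ) (xf : ℕ → Fin N → ℂ) (k : ℕ)
    (h : ∀ j < k, star (xf j) ⬝ᵥ xf j = 1) :
    (Pprod θf xf k)ᴴ * Pprod θf xf k = 1 := by
  induction k with
  | zero => simp [Pprod_zero]
  | succ k ih =>
    rw [Pprod_succ, conjTranspose_mul, mul_assoc, ← mul_assoc ((pseudoRot (θf k) (xf k))ᴴ),
      pr_H_mul _ (h k (by omega)), one_mul]
    exact ih (fun j hj => h j (by omega))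

/-! ### helpers for matrices applied to basis vectors -/

lemma mulVec_single_apply {N : ℕ} (M : Matrix (Fin N) (Fin N) ℂ) (i j : Fin N) :
    (M *ᵥ Pi.single j 1) i = M i j := by
  rw [Matrix.mulVec, dotProduct_single, mul_one]

lemma star_transpose_mulVec {N : ℕ} (M : Matrix (Fin N) (Fin N) ℂ) (v : Fin N → ℂ) :
    star (Mᵀ *ᵥ v) = Mᴴ *ᵥ star v := by
  funext i
  simp only [Pi.star_apply, Matrix.mulVec, dotProduct, transpose_apply, conjTranspose_apply,
    star_sum, star_mul', Pi.star_apply]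

/-! ### Jmat lemmas -/

variable {n : ℕ}

lemma J_star_entry (c d : Fin (2*n)) : star (Jmat n c d) = Jmat n c d := by
  simp only [Jmat, Matrix.of_apply]
  split_ifs <;> simp

lemma J_transpose : (Jmat n)ᵀ = -(Jmat n) := by
  ext i j
  simp only [transpose_apply, Jmat, Matrix.of_apply, Matrix.neg_apply]
  split_ifs <;> first | rfl | (exfalso; omega) | norm_num

lemma J_mulVec_even (a b : Fin (2*n)) (ha : (a:ℕ) % 2 = 0) (hb : (b:ℕ) = (a:ℕ)+1)
    (v : Fin (2*n) → ℂ) : (Jmat n *ᵥ v) a = v b := by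
  simp only [Matrix.mulVec, dotProduct]
  rw [Finset.sum_eq_single b]
  · have h : Jmat n a b = 1 := by simp [Jmat, ha, hb]
    rw [h, one_mul]
  · intro c _ hc
    have hcb : (c:ℕ) ≠ (b:ℕ) := fun hh => hc (Fin.ext hh)
    have h : Jmat n a c = 0 := by
      simp only [Jmat, Matrix.of_apply]
      split_ifs with h1 h2
      · exfalso; omega
      · exfalso; omega
      · rfl
    rw [h, zero_mul]
  · intro h; exact absurd (Finset.mem_univ b) h

lemma J_mulVec_odd (a b : Fin (2*n)) (ha : (a:ℕ) % 2 = 0) (hb : (b:ℕ) = (a:ℕ)+1)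
    (v : Fin (2*n) → ℂ) : (Jmat n *ᵥ v) b = -(v a) := by
  simp only [Matrix.mulVec, dotProduct]
  rw [Finset.sum_eq_single a]
  · have h : Jmat n b a = -1 := by
      simp only [Jmat, Matrix.of_apply]
      split_ifs with h1 h2
      · exfalso; omega
      · rfl
      · exfalso; omega
    rw [h]; ring
  · intro c _ hc
    have hca : (c:ℕ) ≠ (a:ℕ) := fun hh => hc (Fin.ext hh)
    have h : Jmat n b c = 0 := by
      simp only [Jmat, Matrix.of_apply]
      split_ifs with h1 h2
      · exfalso; omega
      · exfalso; omega
      · rfl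
    rw [h, zero_mul]
  · intro h; exact absurd (Finset.mem_univ a) h

lemma J_single_odd (a b : Fin (2*n)) (ha : (a:ℕ) % 2 = 0) (hb : (b:ℕ) = (a:ℕ)+1) :
    Jmat n *ᵥ Pi.single b (1:ℂ) = Pi.single a 1 := by
  funext c
  rw [mulVec_single_apply]
  rcases eq_or_ne c a with h | h
  · subst h
    have h1 : Jmat n c b = 1 := by simp [Jmat, ha, hb]
    rw [h1]; simp
  · have hca : (c:ℕ) ≠ (a:ℕ) := fun hh => h (Fin.ext hh)
    have h0 : Jmat n c b = 0 := by
      simp only [Jmat, Matrix.of_apply]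
      split_ifs with h1 h2
      · exfalso; omega
      · exfalso; omega
      · rfl
    rw [h0]; simp [Pi.single_apply, h]

lemma J_single_even (a b : Fin (2*n)) (ha : (a:ℕ) % 2 = 0) (hb : (b:ℕ) = (a:ℕ)+1) :
    Jmat n *ᵥ Pi.single a (1:ℂ) = -Pi.single b 1 := by
  funext c
  rw [mulVec_single_apply]
  rcases eq_or_ne c b with h | h
  · subst h
    have h1 : Jmat n c a = -1 := by
      simp only [Jmat, Matrix.of_apply]
      split_ifs with h1 h2
      · exfalso; omega
      · rfl
      · exfalso; omega
    rw [h1]; simp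
  · have hcb : (c:ℕ) ≠ (b:ℕ) := fun hh => h (Fin.ext hh)
    have h0 : Jmat n c a = 0 := by
      simp only [Jmat, Matrix.of_apply]
      split_ifs with h1 h2
      · exfalso; omega
      · exfalso; omega
      · rfl
    rw [h0]; simp [Pi.single_apply, h]

lemma JJ_mulVec (v : Fin (2*n) → ℂ) : Jmat n *ᵥ (Jmat n *ᵥ v) = -v := by
  funext c
  rcases Nat.even_or_odd (c:ℕ) with hc | hc
  · have hc0 : (c:ℕ) % 2 = 0 := Nat.even_iff.mp hc
    have hlt : (c:ℕ)+1 < 2*n := by omega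
    have h1 := J_mulVec_even c ⟨(c:ℕ)+1, hlt⟩ hc0 rfl (Jmat n *ᵥ v)
    have h2 := J_mulVec_odd c ⟨(c:ℕ)+1, hlt⟩ hc0 rfl v
    rw [h1, h2]
    rfl
  · have hc1 : (c:ℕ) % 2 = 1 := Nat.odd_iff.mp hc
    have hlt : (c:ℕ) - 1 < 2*n := by omega
    have ha : ((⟨(c:ℕ)-1, hlt⟩ : Fin (2*n)):ℕ) % 2 = 0 := by
      show ((c:ℕ)-1) % 2 = 0; omega
    have hb : (c:ℕ) = ((⟨(c:ℕ)-1, hlt⟩ : Fin (2*n)):ℕ) + 1 := by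
      show (c:ℕ) = ((c:ℕ)-1) + 1; omega
    have h1 := J_mulVec_odd ⟨(c:ℕ)-1, hlt⟩ c ha hb (Jmat n *ᵥ v)
    have h2 := J_mulVec_even ⟨(c:ℕ)-1, hlt⟩ c ha hb v
    rw [h1, h2]
    rfl

lemma star_J_mulVec (v : Fin (2*n) → ℂ) : star (Jmat n *ᵥ v) = Jmat n *ᵥ star v := by
  funext c
  simp only [Pi.star_apply, Matrix.mulVec, dotProduct, star_sum, star_mul']
  refine Finset.sum_congr rfl fun d _ => ?_
  rw [J_star_entry]

lemma vecMul_J (v : Fin (2*n) → ℂ) : v ᵥ* Jmat n = -(Jmat n *ᵥ v) := by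
  conv_lhs => rw [show Jmat n = ((Jmat n)ᵀ)ᵀ from (transpose_transpose _).symm]
  rw [Matrix.vecMul_transpose, J_transpose, Matrix.neg_mulVec]

lemma J_mul_negJ : Jmat n * (-(Jmat n)) = 1 := by
  ext i j
  have h2 : Jmat n *ᵥ Pi.single j (1:ℂ) = fun c => Jmat n c j :=
    funext fun c => mulVec_single_apply _ _ _
  have h1 : (Jmat n * -(Jmat n)) i j = -((Jmat n *ᵥ (Jmat n *ᵥ Pi.single j 1)) i) := by
    rw [h2, Matrix.mul_apply]
    simp only [Matrix.mulVec, dotProduct, Matrix.neg_apply, mul_neg]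
    rw [← Finset.sum_neg_distrib]
  rw [h1, JJ_mulVec]
  simp [Pi.single_apply, Matrix.one_apply]

lemma J_inv : (Jmat n)⁻¹ = -(Jmat n) := Matrix.inv_eq_right_inv J_mul_negJ

lemma J_mul_pr_transpose (t : ℝ) (v : Fin (2*n) → ℂ) :
    Jmat n * (pseudoRot t v)ᵀ = pseudoRot t (Jmat n *ᵥ star v) * Jmat n := by
  rw [pr_transpose, pseudoRot, pseudoRot, mul_sub, sub_mul, mul_one, one_mul]
  congr 1
  rw [Matrix.mul_smul, Matrix.smul_mul]
  congr 1
  rw [star_star, star_J_mulVec, star_star, mul_vmv, vmv_mul]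
  congr 1
  rw [vecMul_J, JJ_mulVec, neg_neg]

lemma mulJ_even (M : Matrix (Fin (2*n)) (Fin (2*n)) ℂ) (c a b : Fin (2*n))
    (ha : (a:ℕ) % 2 = 0) (hb : (b:ℕ) = (a:ℕ)+1) : (M * Jmat n) c a = -(M c b) := by
  rw [Matrix.mul_apply]
  rw [Finset.sum_eq_single b]
  · have h : Jmat n b a = -1 := by
      simp only [Jmat, Matrix.of_apply]
      split_ifs with h1 h2
      · exfalso; omega
      · rfl
      · exfalso; omega
    rw [h]; ring
  · intro d _ hd
    have hdb : (d:ℕ) ≠ (b:ℕ) := fun hh => hd (Fin.ext hh)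
    have h : Jmat n d a = 0 := by
      simp only [Jmat, Matrix.of_apply]
      split_ifs with h1 h2
      · exfalso; omega
      · exfalso; omega
      · rfl
    rw [h, mul_zero]
  · intro h; exact absurd (Finset.mem_univ b) h

lemma mulJ_odd (M : Matrix (Fin (2*n)) (Fin (2*n)) ℂ) (c a b : Fin (2*n))
    (ha : (a:ℕ) % 2 = 0) (hb : (b:ℕ) = (a:ℕ)+1) : (M * Jmat n) c b = M c a := by
  rw [Matrix.mul_apply]
  rw [Finset.sum_eq_single a]
  · have h : Jmat n a b = 1 := by simp [Jmat, ha, hb]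
    rw [h, mul_one]
  · intro d _ hd
    have hda : (d:ℕ) ≠ (a:ℕ) := fun hh => hd (Fin.ext hh)
    have h : Jmat n d b = 0 := by
      simp only [Jmat, Matrix.of_apply]
      split_ifs with h1 h2
      · exfalso; omega
      · exfalso; omega
      · rfl
    rw [h, mul_zero]
  · intro h; exact absurd (Finset.mem_univ a) h

/-! ### the key unitarity column lemma -/

lemma lemP (U : Matrix (Fin (2*n)) (Fin (2*n)) ℂ) (hU : Uᴴ * U = 1)
    (hsk : (U * Jmat n)ᵀ = -(U * Jmat n)) (a b : Fin (2*n)) (ha : (a:ℕ) % 2 = 0)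
    (hb : (b:ℕ) = (a:ℕ)+1) (hcol : U *ᵥ Pi.single b 1 = Pi.single b 1) :
    U *ᵥ Pi.single a 1 = Pi.single a 1 := by
  have hUbb : U b b = 1 := by
    have h := congrFun hcol b
    rw [mulVec_single_apply] at h
    rw [h]; simp
  have h1 : (U * Jmat n) b a = -(U b b) := mulJ_even U b a b ha hb
  have h2 : (U * Jmat n) a b = U a a := mulJ_odd U a a b ha hb
  have hskab := congrFun (congrFun hsk a) b
  rw [transpose_apply, Matrix.neg_apply, h1, h2] at hskab
  have hUaa : U a a = 1 := by
    have h3 : U b b = U a a := neg_inj.mp hskab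
    rw [← h3, hUbb]
  have hsum : ∑ c, Complex.normSq (U c a) = 1 := by
    have h := congrFun (congrFun hU a) a
    rw [Matrix.mul_apply] at h
    simp only [conjTranspose_apply, Matrix.one_apply_eq] at h
    have h' : ∑ c, (Complex.normSq (U c a) : ℂ) = 1 := by
      rw [← h]
      refine Finset.sum_congr rfl fun c _ => ?_
      rw [Complex.star_def, mul_comm, Complex.mul_conj]
    rw [← Complex.ofReal_sum] at h'
    exact_mod_cast h'
  have hzero : ∀ c, c ≠ a → U c a = 0 := by
    intro c hc
    have h5 : Complex.normSq (U a a) + ∑ d ∈ Finset.univ.erase a, Complex.normSq (U d a)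
        = ∑ d, Complex.normSq (U d a) := by
      simpa using Finset.add_sum_erase Finset.univ (fun d => Complex.normSq (U d a))
        (Finset.mem_univ a)
    rw [hsum, hUaa, Complex.normSq_one] at h5
    have h4 : ∑ d ∈ Finset.univ.erase a, Complex.normSq (U d a) = 0 := by linarith
    have h6 := (Finset.sum_eq_zero_iff_of_nonneg
      (fun d _ => Complex.normSq_nonneg (U d a))).mp h4 c (by simp [hc])
    exact Complex.normSq_eq_zero.mp h6
  funext c
  rw [mulVec_single_apply]
  rcases eq_or_ne c a with h | h
  · subst h; rw [hUaa]; simp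
  · rw [hzero c h]; simp [Pi.single_apply, h]

/-! ### main induction -/

theorem aux (n : ℕ) (m : ℕ → ℕ) (θ : ℕ → ℝ) (x : ℕ → Fin (2*n) → ℂ) :
    ∀ k : ℕ,
      (∀ j < k, star (x j) ⬝ᵥ x j = 1 ∧ minBelongs (x j) (m j)) →
      (∀ i j, i < j → j < k → m i < m j) →
      (∀ j < k, ¬ ∃ t : ℤ, θ j = 2 * Real.pi * t) →
      (Pprod θ x k * Jmat n)ᵀ = -(Pprod θ x k * Jmat n) →
      Even k ∧ (2 ≤ k → m 0 % 2 = 1 ∧ m 1 = m 0 + 1 ∧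
        pseudoRot (θ 1) (x 1) = Jmat n * (pseudoRot (θ 0) (x 0))ᵀ * (Jmat n)⁻¹ ∧
        pseudoRot (θ 1) (x 1) = pseudoRot (θ 0) (jmap (x 0))) := by
  intro k
  induction k using Nat.strong_induction_on with
  | _ k IH =>
  intro hx hm hθ hsk
  rcases Nat.eq_zero_or_pos k with hk0 | hkpos
  · subst hk0
    exact ⟨Even.zero, fun h => absurd h (by omega)⟩
  obtain ⟨K, hkK⟩ : ∃ K, k = K + 1 := ⟨k - 1, by omega⟩
  subst hkK
  obtain ⟨hxK1, hxKmin⟩ := hx K (by omega)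
  obtain ⟨hKhigh, iP, hiP, hxKp⟩ := hxKmin
  set M := m K with hM
  have hlam1 : Complex.exp (θ K * I) ≠ 1 := exp_ne_one (hθ K (by omega))
  have hlam1' : (1 : ℂ) - Complex.exp (θ K * I) ≠ 0 := sub_ne_zero.mpr (Ne.symm hlam1)
  set B := Pprod θ x (K+1) with hBdef
  have hB1 : B = pseudoRot (θ K) (x K) * Pprod θ x K := Pprod_succ θ x K
  set R := Pprod θ x K with hRdef
  set c₁ := -((1 - Complex.exp (θ K * I)) * star (x K iP)) with hc₁def
  have hc₁ : c₁ ≠ 0 := neg_ne_zero.mpr (mul_ne_zero hlam1' (star_ne_zero' hxKp))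
  have hlow : ∀ j, j < K → x j iP = 0 := by
    intro j hj
    exact (hx j (by omega)).2.1 iP (by have := hm j K hj (by omega); omega)
  have hRfixP : R *ᵥ Pi.single iP 1 = Pi.single iP 1 := Pprod_fix θ x K iP hlow
  have hcolP : B *ᵥ Pi.single iP 1 = Pi.single iP 1 + c₁ • x K := by
    rw [hB1, ← mulVec_mulVec, hRfixP, pr_mulVec]
    have h0 : star (x K) ⬝ᵥ Pi.single iP (1:ℂ) = star (x K iP) := by
      rw [dotProduct_single, mul_one]; rfl
    rw [h0, sub_eq_add_neg, ← neg_smul, ← hc₁def]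
  have hBunit : Bᴴ * B = 1 := Pprod_H_mul θ x (K+1) (fun j hj => (hx j hj).1)
  have hMev : M % 2 = 0 := by
    rcases Nat.mod_two_eq_zero_or_one M with h | hModd
    · exact h
    exfalso
    have haev : (iP:ℕ) % 2 = 0 := by omega
    have hMlt : M < 2*n := by omega
    have hcolb : B *ᵥ Pi.single (⟨M, hMlt⟩ : Fin (2*n)) 1 = Pi.single ⟨M, hMlt⟩ 1 := by
      apply Pprod_fix
      intro j hj
      have hmj : m j ≤ M := by
        rcases Nat.lt_or_ge j K with h | h
        · exact le_of_lt (hm j K h (by omega))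
        · have hjK : j = K := by omega
          subst hjK; omega
      exact (hx j hj).2.1 _ hmj
    have hP := lemP B hBunit hsk iP ⟨M, hMlt⟩ haev (by show M = (iP:ℕ)+1; omega) hcolb
    have h1 := congrFun hcolP iP
    rw [hP] at h1
    simp only [Pi.add_apply, Pi.smul_apply, smul_eq_mul, Pi.single_eq_same] at h1
    have h2 : c₁ * x K iP = 0 := by linear_combination -h1
    exact mul_ne_zero hc₁ hxKp h2
  · -- M even
    have hM2 : 2 ≤ M := by omega
    have hqlt : M - 2 < 2*n := by omega
    set iQ : Fin (2*n) := ⟨M-2, hqlt⟩ with hiQdef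
    have hiQval : (iQ:ℕ) = M - 2 := rfl
    have hQev : (iQ:ℕ) % 2 = 0 := by rw [hiQval]; omega
    have hPQ : (iP:ℕ) = (iQ:ℕ) + 1 := by rw [hiQval]; omega
    have hBJqq : (B * Jmat n) iQ iQ = 0 := by
      have h := congrFun (congrFun hsk iQ) iQ
      rw [transpose_apply, Matrix.neg_apply] at h
      linear_combination h / 2
    have hBqp : B iQ iP = 0 := by
      have h := mulJ_even B iQ iQ iP hQev hPQ
      rw [hBJqq] at h
      linear_combination h
    have hxKq : x K iQ = 0 := by
      have h1 := congrFun hcolP iQ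
      rw [mulVec_single_apply, hBqp] at h1
      simp only [Pi.add_apply, Pi.smul_apply, smul_eq_mul, Pi.single_apply] at h1
      rw [if_neg (by intro hh; rw [hh] at hPQ; omega)] at h1
      have h2 : c₁ * x K iQ = 0 := by linear_combination -h1
      rcases mul_eq_zero.mp h2 with h | h
      · exact absurd h hc₁
      · exact h
    set w := Jmat n *ᵥ star (x K) with hwdef
    have hwq : w iQ = star (x K iP) := by
      rw [hwdef, J_mulVec_even iQ iP hQev hPQ]; rfl
    have hwp : w iP = 0 := by
      rw [hwdef, J_mulVec_odd iQ iP hQev hPQ]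
      show -(star (x K) iQ) = 0
      rw [Pi.star_apply, hxKq, star_zero, neg_zero]
    have hwq0 : w iQ ≠ 0 := by rw [hwq]; exact star_ne_zero' hxKp
    have hwunit : star w ⬝ᵥ w = 1 := by
      have h1 : star w = Jmat n *ᵥ x K := by rw [hwdef, star_J_mulVec, star_star]
      rw [h1, hwdef, dotProduct_mulVec, vecMul_J, neg_dotProduct, JJ_mulVec,
        neg_dotProduct, neg_neg, dotProduct_comm]
      exact hxK1
    have hsing : star (Pi.single iQ (1:ℂ) : Fin (2*n) → ℂ) = Pi.single iQ 1 := by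
      funext d
      simp only [Pi.star_apply, Pi.single_apply]
      split_ifs <;> simp
    have hJB : Jmat n * Bᵀ = B * Jmat n := by
      have h := hsk
      rw [transpose_mul, J_transpose, neg_mul] at h
      exact neg_inj.mp h
    have hBTq : Bᵀ *ᵥ Pi.single iQ 1 = Rᵀ *ᵥ Pi.single iQ 1 := by
      rw [hB1, transpose_mul, ← mulVec_mulVec, pr_transpose, pr_mulVec]
      have h0 : star (star (x K)) ⬝ᵥ Pi.single iQ (1:ℂ) = 0 := by
        rw [star_star, dotProduct_single, mul_one, hxKq]
      rw [h0, mul_zero, zero_smul, sub_zero]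
    have hRTq : Rᵀ *ᵥ Pi.single iQ 1 = Pi.single iQ 1 + c₁ • (Jmat n *ᵥ x K) := by
      have h2 : Jmat n *ᵥ (Bᵀ *ᵥ Pi.single iQ 1) = B *ᵥ (Jmat n *ᵥ Pi.single iQ 1) := by
        rw [mulVec_mulVec, mulVec_mulVec, hJB]
      rw [hBTq, J_single_even iQ iP hQev hPQ, Matrix.mulVec_neg, hcolP] at h2
      have h3 := congrArg (fun u => Jmat n *ᵥ u) h2
      rw [JJ_mulVec, Matrix.mulVec_neg, Matrix.mulVec_add, Matrix.mulVec_smul,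
        J_single_odd iQ iP hQev hPQ] at h3
      exact neg_inj.mp h3
    have hkey : R *ᵥ (Pi.single iQ 1 + star c₁ • w) = Pi.single iQ 1 := by
      have h4 : star (Rᵀ *ᵥ Pi.single iQ 1) = Pi.single iQ 1 + star c₁ • w := by
        rw [hRTq, star_add, hsing, star_smul, star_J_mulVec]
      have h5 : star (Rᵀ *ᵥ Pi.single iQ 1) = Rᴴ *ᵥ Pi.single iQ 1 := by
        rw [star_transpose_mulVec, hsing]
      rw [← h4, h5, mulVec_mulVec, Pprod_mul_H θ x K (fun j hj => (hx j (by omega)).1),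
        Matrix.one_mulVec]
    have hsc₁ : star c₁ ≠ 0 := star_ne_zero' hc₁
    by_cases hall : ∀ j, j < K → x j iQ = 0
    · exfalso
      have h6 := congrFun hkey iQ
      rw [Pprod_coord θ x K iQ hall] at h6
      simp only [Pi.add_apply, Pi.smul_apply, smul_eq_mul, Pi.single_eq_same] at h6
      have h7 : star c₁ * w iQ = 0 := by linear_combination h6
      rcases mul_eq_zero.mp h7 with h | h
      · exact hsc₁ h
      · exact hwq0 h
    · push_neg at hall
      obtain ⟨j0, hj0K, hj0ne⟩ := hall
      have hKpos : 1 ≤ K := by omega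
      obtain ⟨K2, hKK2⟩ : ∃ K2, K = K2 + 1 := ⟨K - 1, by omega⟩
      subst hKK2
      have hmj0 : M - 1 ≤ m j0 := by
        by_contra hcon
        push_neg at hcon
        exact hj0ne ((hx j0 (by omega)).2.1 iQ (by rw [hiQval]; omega))
      have hmK2lt : m K2 < M := hm K2 (K2+1) (by omega) (by omega)
      have hmK2 : m K2 = M - 1 := by
        rcases Nat.lt_or_ge j0 K2 with h | h
        · have := hm j0 K2 h (by omega); omega
        · have hj0K2 : j0 = K2 := by omega
          subst hj0K2; omega
      obtain ⟨hxK2unit, hxK2min⟩ := hx K2 (by omega)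
      obtain ⟨hK2high, iQ', hiQ', hxQ'⟩ := hxK2min
      have hiQ'eq : iQ' = iQ := by
        apply Fin.ext
        rw [hiQval]
        omega
      rw [hiQ'eq] at hxQ'
      have hx2p : x K2 iP = 0 := hK2high iP (by omega)
      set lam2 := Complex.exp (θ K2 * I) with hlam2def
      set R₂ := Pprod θ x K2 with hR₂def
      have hRsplit : R = pseudoRot (θ K2) (x K2) * R₂ := Pprod_succ θ x K2
      have hlow2 : ∀ j, j < K2 → x j iQ = 0 := by
        intro j hj
        exact (hx j (by omega)).2.1 iQ (by have := hm j K2 hj (by omega); omega)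
      have hlow2p : ∀ j, j < K2 → x j iP = 0 := fun j hj => hlow j (by omega)
      have hR₂q : R₂ *ᵥ Pi.single iQ 1 = Pi.single iQ 1 := Pprod_fix θ x K2 iQ hlow2
      set z := R₂ *ᵥ w with hzdef
      have hkey2 : pseudoRot (θ K2) (x K2) *ᵥ (Pi.single iQ 1 + star c₁ • z)
          = Pi.single iQ 1 := by
        rw [hRsplit, ← mulVec_mulVec, Matrix.mulVec_add, hR₂q, Matrix.mulVec_smul] at hkey
        exact hkey
      rw [pr_mulVec] at hkey2
      set g := (1 - lam2) * (star (x K2) ⬝ᵥ (Pi.single iQ 1 + star c₁ • z)) with hgdef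
      have hzx : star c₁ • z = g • x K2 := by
        rw [sub_eq_iff_eq_add] at hkey2
        exact add_left_cancel hkey2
      set ν := (star c₁)⁻¹ * g with hνdef
      have hz : z = ν • x K2 := by
        have h9 := congrArg (fun u => (star c₁)⁻¹ • u) hzx
        simp only [smul_smul] at h9
        rw [inv_mul_cancel₀ hsc₁, one_smul] at h9
        exact h9
      have hF : ν * x K2 iQ = star (x (K2+1) iP) := by
        have h10 : z iQ = w iQ := Pprod_coord θ x K2 iQ hlow2 w
        rw [hz] at h10
        rw [← hwq]
        exact h10
      have hνunit : star ν * ν = 1 := by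
        have hz1 : star z ⬝ᵥ z = 1 := by
          rw [hzdef, Matrix.star_mulVec, dotProduct_mulVec, vecMul_vecMul,
            Pprod_H_mul θ x K2 (fun j hj => (hx j (by omega)).1), vecMul_one, hwunit]
        rw [hz] at hz1
        have := hz1
        simp only [smul_dotProduct, dotProduct_smul, hxK2unit, star_smul,
          smul_eq_mul, mul_one] at this
        linear_combination this
      have hν0 : ν ≠ 0 := by
        intro h
        rw [h, zero_mul] at hF
        exact star_ne_zero' hxKp hF.symm
      set C := pseudoRot (-θ (K2+1)) (x (K2+1)) * B * pseudoRot (-θ (K2+1)) w with hCdef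
      have hC2 : C = pseudoRot (θ K2) (x K2) * R₂ * pseudoRot (-θ (K2+1)) w := by
        rw [hCdef, hB1, hRsplit, ← mul_assoc (pseudoRot (-θ (K2+1)) (x (K2+1))) _ _,
          pr_inv_mul (θ (K2+1)) hxK1, one_mul]
      have e1J : Jmat n * (pseudoRot (-θ (K2+1)) w)ᵀ
          = pseudoRot (-θ (K2+1)) (x (K2+1)) * Jmat n := by
        rw [J_mul_pr_transpose]
        have hsw : Jmat n *ᵥ star w = -(x (K2+1)) := by
          rw [hwdef, star_J_mulVec, star_star, JJ_mulVec]
        rw [hsw, pr_neg]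
      have e2J : Jmat n * (pseudoRot (-θ (K2+1)) (x (K2+1)))ᵀ
          = pseudoRot (-θ (K2+1)) w * Jmat n := by
        rw [J_mul_pr_transpose, ← hwdef]
      have hCJ : Jmat n * Cᵀ = C * Jmat n := by
        rw [hCdef, transpose_mul, transpose_mul, ← mul_assoc, ← mul_assoc, e1J,
          mul_assoc (pseudoRot (-θ (K2+1)) (x (K2+1))) (Jmat n) Bᵀ, hJB,
          ← mul_assoc, mul_assoc _ (Jmat n) _, e2J, ← mul_assoc]
      have hCp : C *ᵥ Pi.single iP 1 = Pi.single iP 1 := by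
        rw [hC2, ← mulVec_mulVec, ← mulVec_mulVec]
        have e1 : pseudoRot (-θ (K2+1)) w *ᵥ Pi.single iP 1 = Pi.single iP 1 := by
          rw [pr_mulVec]
          have h0 : star w ⬝ᵥ Pi.single iP (1:ℂ) = 0 := by
            rw [dotProduct_single, mul_one, Pi.star_apply, hwp, star_zero]
          rw [h0, mul_zero, zero_smul, sub_zero]
        have e2 : R₂ *ᵥ Pi.single iP 1 = Pi.single iP 1 := Pprod_fix θ x K2 iP hlow2p
        have e3 : pseudoRot (θ K2) (x K2) *ᵥ Pi.single iP 1 = Pi.single iP 1 := by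
          rw [pr_mulVec]
          have h0 : star (x K2) ⬝ᵥ Pi.single iP (1:ℂ) = 0 := by
            rw [dotProduct_single, mul_one, Pi.star_apply, hx2p, star_zero]
          rw [h0, mul_zero, zero_smul, sub_zero]
        rw [e1, e2, e3]
      have hCunit : Cᴴ * C = 1 := by
        rw [hCdef, conjTranspose_mul, conjTranspose_mul]
        have u1 : (pseudoRot (-θ (K2+1)) (x (K2+1)))ᴴ * pseudoRot (-θ (K2+1)) (x (K2+1)) = 1 :=
          pr_H_mul _ hxK1
        have u2 : (pseudoRot (-θ (K2+1)) w)ᴴ * pseudoRot (-θ (K2+1)) w = 1 := pr_H_mul _ hwunit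
        calc (pseudoRot (-θ (K2+1)) w)ᴴ * (Bᴴ * (pseudoRot (-θ (K2+1)) (x (K2+1)))ᴴ)
              * (pseudoRot (-θ (K2+1)) (x (K2+1)) * B * pseudoRot (-θ (K2+1)) w)
            = (pseudoRot (-θ (K2+1)) w)ᴴ * (Bᴴ *
              (((pseudoRot (-θ (K2+1)) (x (K2+1)))ᴴ * pseudoRot (-θ (K2+1)) (x (K2+1))) *
                (B * pseudoRot (-θ (K2+1)) w))) := by
              simp only [mul_assoc]
        _ = 1 := by rw [u1, one_mul, ← mul_assoc Bᴴ B _, hBunit, one_mul, u2]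
      have hCskew : (C * Jmat n)ᵀ = -(C * Jmat n) := by
        rw [transpose_mul, J_transpose, neg_mul, hCJ]
      have hCq := lemP C hCunit hCskew iQ iP hQev hPQ hCp
      set c₄ := -((1 - Complex.exp ((-θ (K2+1) : ℝ) * I)) * (x (K2+1) iP)) with hc₄def
      have hstep1 : pseudoRot (-θ (K2+1)) w *ᵥ Pi.single iQ 1 = Pi.single iQ 1 + c₄ • w := by
        rw [pr_mulVec]
        have h0 : star w ⬝ᵥ Pi.single iQ (1:ℂ) = x (K2+1) iP := by
          rw [dotProduct_single, mul_one, Pi.star_apply, hwq, star_star]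
        rw [h0, sub_eq_add_neg, ← neg_smul, ← hc₄def]
      have hstep2 : R₂ *ᵥ (Pi.single iQ 1 + c₄ • w) = Pi.single iQ 1 + (c₄ * ν) • x K2 := by
        rw [Matrix.mulVec_add, hR₂q, Matrix.mulVec_smul, ← hzdef, hz, smul_smul]
      have hstep3 : C *ᵥ Pi.single iQ 1
          = Pi.single iQ 1 + (c₄ * ν * lam2 - (1 - lam2) * star (x K2 iQ)) • x K2 := by
        rw [hC2, ← mulVec_mulVec, ← mulVec_mulVec, hstep1, hstep2, pr_mulVec]
        have hdot : star (x K2) ⬝ᵥ (Pi.single iQ 1 + (c₄ * ν) • x K2)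
            = star (x K2 iQ) + c₄ * ν := by
          rw [dotProduct_add, dotProduct_single, mul_one, Pi.star_apply,
            dotProduct_smul, hxK2unit, smul_eq_mul, mul_one]
        rw [hdot, ← hlam2def, add_sub_assoc]
        congr 1
        rw [← sub_smul]
        congr 1
        ring
      have hcoef : c₄ * ν * lam2 - (1 - lam2) * star (x K2 iQ) = 0 := by
        rw [hCq] at hstep3
        have h11 : (c₄ * ν * lam2 - (1 - lam2) * star (x K2 iQ)) • x K2 = 0 := by
          have h := hstep3.symm
          rwa [add_eq_left] at h
        have h12 := congrFun h11 iQ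
        simp only [Pi.smul_apply, smul_eq_mul, Pi.zero_apply] at h12
        rcases mul_eq_zero.mp h12 with h | h
        · exact h
        · exact absurd h hxQ'
      have hxKiP : x (K2+1) iP = star ν * star (x K2 iQ) := by
        have h := congrArg star hF
        rw [star_mul', star_star] at h
        exact h.symm
      have hlameq : lam2 = Complex.exp (θ (K2+1) * I) := by
        have hexp : Complex.exp ((-θ (K2+1) : ℝ) * I) = (Complex.exp (θ (K2+1) * I))⁻¹ :=
          exp_neg' (θ (K2+1))
        rw [hc₄def, hexp, hxKiP] at hcoef
        have hs : star (x K2 iQ) ≠ 0 := star_ne_zero' hxQ'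
        have hlam1ne : Complex.exp (θ (K2+1) * I) ≠ 0 := Complex.exp_ne_zero _
        have key : ((1 - (Complex.exp (θ (K2+1) * I))⁻¹) * lam2 + (1 - lam2)) * star (x K2 iQ)
            = 0 := by
          linear_combination (-1 : ℂ) * hcoef
            - (1 - (Complex.exp (θ (K2+1) * I))⁻¹) * star (x K2 iQ) * lam2 * hνunit
        rcases mul_eq_zero.mp key with h | h
        · have h3 : Complex.exp (θ (K2+1) * I) * (Complex.exp (θ (K2+1) * I))⁻¹ = 1 :=
            mul_inv_cancel₀ hlam1ne
          linear_combination (- Complex.exp (θ (K2+1) * I)) * h - lam2 * h3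
        · exact absurd h hs
      have hA2R2 : pseudoRot (θ K2) (x K2) * R₂ = R₂ * pseudoRot (θ (K2+1)) w := by
        have hvz : vecMulVec (x K2) (star (x K2)) = vecMulVec z (star z) := by
          rw [hz]
          exact (vmv_unit_smul ν (x K2) (by rw [mul_comm]; exact hνunit)).symm
        have e1 : star z ᵥ* R₂ = star w := by
          rw [hzdef, Matrix.star_mulVec, vecMul_vecMul,
            Pprod_H_mul θ x K2 (fun j hj => (hx j (by omega)).1), vecMul_one]
        have hzR : vecMulVec z (star z) * R₂ = R₂ * vecMulVec w (star w) := by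
          rw [vmv_mul, e1, mul_vmv, ← hzdef]
        rw [pseudoRot, pseudoRot, ← hlam2def, ← hlameq]
        rw [sub_mul, one_mul, mul_sub, mul_one, Matrix.smul_mul, Matrix.mul_smul, hvz, hzR]
      have hCR2 : C = R₂ := by
        rw [hC2, hA2R2, mul_assoc, pr_mul_inv (θ (K2+1)) hwunit, mul_one]
      have hskew2 : (R₂ * Jmat n)ᵀ = -(R₂ * Jmat n) := by
        have h := hCJ
        rw [hCR2] at h
        rw [transpose_mul, J_transpose, neg_mul, h]
      have IH2 := IH K2 (by omega) (fun j hj => hx j (by omega))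
        (fun i j hij hj => hm i j hij (by omega)) (fun j hj => hθ j (by omega)) hskew2
      obtain ⟨hEv2, hbot2⟩ := IH2
      constructor
      · obtain ⟨t, ht⟩ := hEv2
        exact ⟨t + 1, by omega⟩
      · intro _
        rcases Nat.lt_or_ge K2 2 with hK2lt | hK2ge
        · have hK20 : K2 = 0 := by
            obtain ⟨t, ht⟩ := hEv2; omega
          subst hK20
          have hzw : z = w := by rw [hzdef, hR₂def, Pprod_zero, Matrix.one_mulVec]
          have hwv : w = ν • x 0 := by rw [← hzw, hz]
          have hg4 : pseudoRot (θ 1) (x 1) = pseudoRot (θ 0) (jmap (x 0)) := by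
            have hx0 : x 0 = star ν • w := by
              rw [hwv, smul_smul, hνunit, one_smul]
            have hstw : star w = Jmat n *ᵥ x (0+1) := by rw [hwdef, star_J_mulVec, star_star]
            have hjx0 : jmap (x 0) = (-ν) • x 1 := by
              show Jmat n *ᵥ star (x 0) = _
              rw [hx0, star_smul, star_star, Matrix.mulVec_smul, hstw, JJ_mulVec,
                smul_neg, ← neg_smul]
            rw [hjx0, pr_smul_eq (θ 0) (-ν) (x 1)
              (by rw [star_neg, neg_mul_neg, mul_comm]; exact hνunit)]
            have hee : Complex.exp (θ 1 * I) = Complex.exp (θ 0 * I) := by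
              have h1 : lam2 = Complex.exp (θ 0 * I) := hlam2def
              have h2 : lam2 = Complex.exp (θ 1 * I) := hlameq
              rw [← h2, h1]
            exact pr_congr (x 1) hee
          have hM1 : M = m 1 := hM
          refine ⟨by omega, by omega, ?_, hg4⟩
          have hjm : jmap (x 0) = Jmat n *ᵥ star (x 0) := rfl
          calc pseudoRot (θ 1) (x 1) = pseudoRot (θ 0) (jmap (x 0)) := hg4
            _ = pseudoRot (θ 0) (jmap (x 0)) * (Jmat n * -(Jmat n)) := by
                rw [J_mul_negJ, mul_one]
            _ = (pseudoRot (θ 0) (jmap (x 0)) * Jmat n) * -(Jmat n) := by rw [mul_assoc]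
            _ = (Jmat n * (pseudoRot (θ 0) (x 0))ᵀ) * -(Jmat n) := by
                rw [hjm, ← J_mul_pr_transpose]
            _ = Jmat n * (pseudoRot (θ 0) (x 0))ᵀ * (Jmat n)⁻¹ := by rw [J_inv]
        · exact hbot2 hK2ge


end Stmt16Aux

theorem stmt16 {n : ℕ} (B : Matrix (Fin (2 * n)) (Fin (2 * n)) ℂ)
    (hU : B ∈ Matrix.unitaryGroup (Fin (2 * n)) ℂ)
    (hskew : (B * Jmat n)ᵀ = -(B * Jmat n))
    (k : ℕ) (m : ℕ → ℕ) (θ : ℕ → ℝ) (x : ℕ → Fin (2 * n) → ℂ)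
    (hx : ∀ j < k, star (x j) ⬝ᵥ x j = 1 ∧ minBelongs (x j) (m j))
    (hm : ∀ i j, i < j → j < k → m i < m j)
    (hθ : ∀ j < k, ¬ ∃ t : ℤ, θ j = 2 * Real.pi * t)
    (hB : B = (List.ofFn fun j : Fin k =>
        pseudoRot (θ (k - 1 - (j : ℕ))) (x (k - 1 - (j : ℕ)))).prod) :
    Even k ∧
    (2 ≤ k →
      m 0 % 2 = 1 ∧ m 1 = m 0 + 1 ∧
      pseudoRot (θ 1) (x 1) = Jmat n * (pseudoRot (θ 0) (x 0))ᵀ * (Jmat n)⁻¹ ∧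
      pseudoRot (θ 1) (x 1) = pseudoRot (θ 0) (jmap (x 0))) := by
  subst hB
  exact Stmt16Aux.aux n m θ x k hx hm hθ hskew
end

section
/- With Σ denoting closed Schubert sets in SU_n: (1) for every increasing tuple 𝐦 = (m_1, m_2, …, m_r) with 1 < m_j ≤ n, one has Σ_𝐦 = Σ_{m_1}·Σ_{m_2}⋯Σ_{m_r}; and (2) if 𝐦 = (m_1,…,m_r) and 𝐦' = (m'_1,…,m'_{r'}) are increasing tuples with {m_1,…,m_r} ∩ {m'_1,…,m'_{r'}} = ∅, then Σ_𝐦 · Σ_{𝐦'} = Σ_{𝐦''}, where 𝐦'' is the union of the entries of 𝐦 and 𝐦' arranged in increasing order. -/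
open Matrix Complex Pointwise

/-- The first standard basis vector `e₁` of `ℂⁿ`. -/
noncomputable def e1 (n : ℕ) : Fin n → ℂ := fun i => if (i : ℕ) = 0 then 1 else 0

/-- The closed Schubert set `Σ_𝐦 ⊆ SU_n`: all products
`A_{(−(θ₁+⋯+θ_r), e₁)}·A_{(θ₁,x₁)}⋯A_{(θ_r,x_r)}` where each `x_j` is a unit vector
lying in `ℂ^{m_j}` (its 0-based coordinates `≥ m_j` vanish). -/
noncomputable def schubertSet (n : ℕ) {r : ℕ} (m : Fin r → ℕ) :
    Set (Matrix (Fin n) (Fin n) ℂ) :=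
  { M | ∃ (θ : Fin r → ℝ) (x : Fin r → Fin n → ℂ),
      (∀ j, star (x j) ⬝ᵥ x j = 1 ∧ ∀ i : Fin n, m j ≤ (i : ℕ) → x j i = 0) ∧
      M = pseudoRot (-(∑ j, θ j)) (e1 n) *
        (List.ofFn fun j => pseudoRot (θ j) (x j)).prod }


namespace SchubAux


variable {n : ℕ}

noncomputable def Rc (c : ℂ) (x : Fin n → ℂ) : Matrix (Fin n) (Fin n) ℂ :=
  1 - (1 - c) • Matrix.vecMulVec x (star x)

lemma pseudoRot_eq (θ : ℝ) (x : Fin n → ℂ) :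
    pseudoRot θ x = Rc (Complex.exp (θ * Complex.I)) x := rfl

lemma Rc_one (x : Fin n → ℂ) : Rc (1:ℂ) x = 1 := by simp [Rc]

lemma vecMulVec_mulVec (u v x : Fin n → ℂ) : vecMulVec u v *ᵥ x = (v ⬝ᵥ x) • u := by
  ext i
  simp [vecMulVec, mulVec, dotProduct, Finset.mul_sum, mul_comm, mul_assoc, mul_left_comm]

lemma mul_vecMulVec (M : Matrix (Fin n) (Fin n) ℂ) (u v : Fin n → ℂ) :
    M * vecMulVec u v = vecMulVec (M *ᵥ u) v := by
  ext i j
  simp [vecMulVec, mul_apply, mulVec, dotProduct, Finset.sum_mul, mul_assoc]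

lemma vecMulVec_mul (u v : Fin n → ℂ) (M : Matrix (Fin n) (Fin n) ℂ) :
    vecMulVec u v * M = vecMulVec u (v ᵥ* M) := by
  ext i j
  simp [vecMulVec, mul_apply, vecMul, dotProduct, Finset.mul_sum, mul_assoc]

lemma Rc_mul_same {x : Fin n → ℂ} (hx : star x ⬝ᵥ x = 1) (c d : ℂ) :
    Rc c x * Rc d x = Rc (c*d) x := by
  set E := vecMulVec x (star x) with hEdef
  have hE : E * E = E := by
    rw [hEdef, mul_vecMulVec, vecMulVec_mulVec, hx, one_smul]
  show (1 - (1-c) • E) * (1 - (1-d) • E) = 1 - (1 - c*d) • E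
  rw [sub_mul, one_mul, mul_sub, mul_one, smul_mul_assoc, mul_smul_comm, hE, smul_smul]
  module

lemma Rc_conjTranspose (c : ℂ) (x : Fin n → ℂ) : (Rc c x)ᴴ = Rc (star c) x := by
  have h : (vecMulVec x (star x))ᴴ = vecMulVec x (star x) := by
    ext i j
    simp [vecMulVec, conjTranspose_apply, mul_comm]
  rw [Rc, conjTranspose_sub, conjTranspose_smul, conjTranspose_one, h, Rc, star_sub, star_one]

lemma Rc_mulVec (c : ℂ) (x y : Fin n → ℂ) :
    Rc c x *ᵥ y = y - ((1-c) * (star x ⬝ᵥ y)) • x := by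
  rw [Rc, sub_mulVec, one_mulVec, smul_mulVec, vecMulVec_mulVec, smul_smul]


lemma Rc_inv {c : ℂ} {x : Fin n → ℂ} (hc : c * star c = 1) (hx : star x ⬝ᵥ x = 1) :
    Rc c x * Rc (star c) x = 1 := by
  rw [Rc_mul_same hx, hc, Rc_one]

lemma conj_Rc {c : ℂ} {x : Fin n → ℂ} (hc : c * star c = 1) (hx : star x ⬝ᵥ x = 1)
    (d : ℂ) (y : Fin n → ℂ) :
    Rc c x * Rc d y * Rc (star c) x = Rc d (Rc c x *ᵥ y) := by
  have h1 : Rc c x * Rc (star c) x = 1 := Rc_inv hc hx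
  have hQ : Rc c x * vecMulVec y (star y) * Rc (star c) x
      = vecMulVec (Rc c x *ᵥ y) (star (Rc c x *ᵥ y)) := by
    rw [mul_vecMulVec, vecMulVec_mul, star_mulVec, Rc_conjTranspose]
  calc Rc c x * Rc d y * Rc (star c) x
      = Rc c x * (1 - (1-d) • vecMulVec y (star y)) * Rc (star c) x := rfl
    _ = Rc c x * Rc (star c) x
        - (1-d) • (Rc c x * vecMulVec y (star y) * Rc (star c) x) := by
          rw [mul_sub, sub_mul, mul_one, mul_smul_comm, smul_mul_assoc]
    _ = 1 - (1-d) • vecMulVec (Rc c x *ᵥ y) (star (Rc c x *ᵥ y)) := by rw [h1, hQ]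
    _ = Rc d (Rc c x *ᵥ y) := rfl

lemma unit_mulVec {c : ℂ} {x y : Fin n → ℂ} (hc : c * star c = 1)
    (hx : star x ⬝ᵥ x = 1) (hy : star y ⬝ᵥ y = 1) :
    star (Rc c x *ᵥ y) ⬝ᵥ (Rc c x *ᵥ y) = 1 := by
  have hUU : Rc (star c) x * Rc c x = 1 := by
    rw [Rc_mul_same hx, mul_comm, hc, Rc_one]
  rw [star_mulVec, Rc_conjTranspose, dotProduct_mulVec, vecMul_vecMul, hUU, vecMul_one, hy]

lemma supp_mulVec {c : ℂ} {x y : Fin n → ℂ} {a b : ℕ} (hab : a ≤ b)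
    (hxs : ∀ i : Fin n, a ≤ (i : ℕ) → x i = 0) (hys : ∀ i : Fin n, b ≤ (i : ℕ) → y i = 0) :
    ∀ i : Fin n, b ≤ (i : ℕ) → (Rc c x *ᵥ y) i = 0 := by
  intro i hi
  rw [Rc_mulVec]
  simp [hys i hi, hxs i (le_trans hab hi)]

lemma pos_of_unit {x : Fin n → ℂ} (hx : star x ⬝ᵥ x = 1) : 1 ≤ n := by
  rcases n with _ | k
  · exfalso; simpa [dotProduct] using hx
  · omega

lemma e1_unit (hn : 1 ≤ n) : star (e1 n) ⬝ᵥ e1 n = 1 := by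
  rw [dotProduct, Finset.sum_eq_single (⟨0, hn⟩ : Fin n)]
  · simp [e1]
  · intro b _ hb
    have : (b : ℕ) ≠ 0 := by
      intro h; exact hb (Fin.ext h)
    simp [e1, this]
  · simp

lemma e1_supp {m : ℕ} (hm : 1 ≤ m) : ∀ i : Fin n, m ≤ (i : ℕ) → e1 n i = 0 := by
  intro i hi
  have : (i : ℕ) ≠ 0 := by omega
  simp [e1, this]

lemma star_exp (θ : ℝ) : star (cexp (θ * I)) = cexp ((-θ : ℝ) * I) := by
  rw [← starRingEnd_apply, ← Complex.exp_conj]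
  congr 1
  simp [Complex.conj_ofReal]

lemma unit_exp (θ : ℝ) : cexp (θ * I) * star (cexp (θ * I)) = 1 := by
  rw [star_exp, ← Complex.exp_add]
  rw [show ((θ:ℂ) * I + (-θ:ℝ) * I) = 0 by push_cast; ring, Complex.exp_zero]

lemma exp_arg {c : ℂ} (hc : c * star c = 1) : cexp ((Complex.arg c : ℝ) * I) = c := by
  have hns : Complex.normSq c = 1 := by
    have h := hc
    rw [← starRingEnd_apply, Complex.mul_conj] at h
    exact_mod_cast h
  have habs : ‖c‖ = 1 := by
    rw [Complex.norm_def, hns, Real.sqrt_one]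
  have h := Complex.norm_mul_exp_arg_mul_I c
  rw [habs] at h
  simpa using h

def TT (n m : ℕ) : Set (ℂ × Matrix (Fin n) (Fin n) ℂ) :=
  {p | p.1 * star p.1 = 1 ∧ ∃ x : Fin n → ℂ, star x ⬝ᵥ x = 1 ∧
    (∀ i : Fin n, m ≤ (i : ℕ) → x i = 0) ∧ p.2 = Rc p.1 x}

noncomputable def FF (n : ℕ) (S : Set (ℂ × Matrix (Fin n) (Fin n) ℂ)) :
    Set (Matrix (Fin n) (Fin n) ℂ) :=
  (fun p : ℂ × Matrix (Fin n) (Fin n) ℂ => Rc (star p.1) (e1 n) * p.2) '' S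

def GoodS (n : ℕ) (S : Set (ℂ × Matrix (Fin n) (Fin n) ℂ)) : Prop :=
  (∀ p ∈ S, p.1 * star p.1 = 1) ∧
  (∀ d : ℂ, d * star d = 1 → ∀ p ∈ S,
    (p.1, Rc d (e1 n) * p.2 * Rc (star d) (e1 n)) ∈ S)

lemma GoodS_one (hn : 1 ≤ n) : GoodS n 1 := by
  constructor
  · intro p hp
    rw [Set.mem_one] at hp
    subst hp
    simp
  · intro d hd p hp
    rw [Set.mem_one] at hp ⊢
    subst hp
    have : Rc d (e1 n) * (1 : ℂ × Matrix (Fin n) (Fin n) ℂ).2 * Rc (star d) (e1 n) = 1 := by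
      show Rc d (e1 n) * 1 * Rc (star d) (e1 n) = 1
      rw [mul_one, Rc_inv hd (e1_unit hn)]
    rw [this]
    rfl

lemma GoodS_mul (hn : 1 ≤ n) {S S' : Set (ℂ × Matrix (Fin n) (Fin n) ℂ)}
    (hS : GoodS n S) (hS' : GoodS n S') : GoodS n (S * S') := by
  constructor
  · rintro p ⟨u, hu, v, hv, rfl⟩
    have h1 := hS.1 u hu
    have h2 := hS'.1 v hv
    show (u.1 * v.1) * star (u.1 * v.1) = 1
    rw [star_mul']
    calc u.1 * v.1 * (star u.1 * star v.1) = (u.1 * star u.1) * (v.1 * star v.1) := by ring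
    _ = 1 := by rw [h1, h2, one_mul]
  · rintro d hd p ⟨u, hu, v, hv, rfl⟩
    have key : Rc d (e1 n) * (u * v).2 * Rc (star d) (e1 n)
        = (Rc d (e1 n) * u.2 * Rc (star d) (e1 n)) * (Rc d (e1 n) * v.2 * Rc (star d) (e1 n)) := by
      have h1 : Rc (star d) (e1 n) * Rc d (e1 n) = 1 := by
        rw [Rc_mul_same (e1_unit hn), mul_comm, hd, Rc_one]
      show Rc d (e1 n) * (u.2 * v.2) * Rc (star d) (e1 n) = _
      simp only [mul_assoc]
      rw [← mul_assoc (Rc (star d) (e1 n)) (Rc d (e1 n)), h1, one_mul]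
    have := Set.mul_mem_mul (hS.2 d hd u hu) (hS'.2 d hd v hv)
    have heq : ((u.1, Rc d (e1 n) * u.2 * Rc (star d) (e1 n)) :
          ℂ × Matrix (Fin n) (Fin n) ℂ) * (v.1, Rc d (e1 n) * v.2 * Rc (star d) (e1 n))
        = ((u * v).1, Rc d (e1 n) * (u * v).2 * Rc (star d) (e1 n)) := by
      rw [Prod.mk_mul_mk, key]
      rfl
    rwa [heq] at this

lemma GoodS_TT {m : ℕ} (hm : 1 ≤ m) : GoodS n (TT n m) := by
  constructor
  · intro p hp; exact hp.1
  · rintro d hd p ⟨hp1, x, hx, hxs, hp2⟩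
    have hn : 1 ≤ n := pos_of_unit hx
    refine ⟨hp1, Rc d (e1 n) *ᵥ x, unit_mulVec hd (e1_unit hn) hx,
      supp_mulVec hm (e1_supp le_rfl) hxs, ?_⟩
    show Rc d (e1 n) * p.2 * Rc (star d) (e1 n) = _
    rw [hp2, conj_Rc hd (e1_unit hn)]

lemma TT_sub₁ {a b : ℕ} (hab : a ≤ b) : TT n a * TT n b ⊆ TT n b * TT n a := by
  rintro M ⟨p, ⟨hp1, x, hx, hxs, hp2⟩, q, ⟨hq1, y, hy, hys, hq2⟩, rfl⟩
  refine ⟨(q.1, Rc q.1 (Rc p.1 x *ᵥ y)), ⟨hq1, Rc p.1 x *ᵥ y,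
    unit_mulVec hp1 hx hy, supp_mulVec hab hxs hys, rfl⟩, p, ⟨hp1, x, hx, hxs, hp2⟩, ?_⟩
  have key : Rc p.1 x * Rc q.1 y = Rc q.1 (Rc p.1 x *ᵥ y) * Rc p.1 x := by
    rw [← conj_Rc hp1 hx q.1 y]
    simp only [mul_assoc]
    rw [Rc_mul_same hx, mul_comm (star p.1), hp1, Rc_one, mul_one]
  have : (q.1 * p.1, Rc q.1 (Rc p.1 x *ᵥ y) * p.2) = p * q := by
    rw [Prod.ext_iff]
    constructor
    · show q.1 * p.1 = p.1 * q.1; ring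
    · show Rc q.1 (Rc p.1 x *ᵥ y) * p.2 = p.2 * q.2
      rw [hp2, hq2, key]
  exact this

lemma TT_sub₂ {a b : ℕ} (hab : a ≤ b) : TT n b * TT n a ⊆ TT n a * TT n b := by
  rintro M ⟨q, ⟨hq1, y, hy, hys, hq2⟩, p, ⟨hp1, x, hx, hxs, hp2⟩, rfl⟩
  have hsc : star p.1 * star (star p.1) = 1 := by
    rw [star_star, mul_comm]; exact hp1
  refine ⟨p, ⟨hp1, x, hx, hxs, hp2⟩, (q.1, Rc q.1 (Rc (star p.1) x *ᵥ y)),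
    ⟨hq1, Rc (star p.1) x *ᵥ y, unit_mulVec hsc hx hy, supp_mulVec hab hxs hys, rfl⟩, ?_⟩
  have key : Rc q.1 y * Rc p.1 x = Rc p.1 x * Rc q.1 (Rc (star p.1) x *ᵥ y) := by
    have h := conj_Rc hsc hx q.1 y
    rw [star_star] at h
    rw [← h]
    simp only [← mul_assoc]
    rw [Rc_mul_same hx, hp1, Rc_one, one_mul]
  have : (p.1 * q.1, Rc p.1 x * Rc q.1 (Rc (star p.1) x *ᵥ y)) = q * p := by
    rw [Prod.ext_iff]
    constructor
    · show p.1 * q.1 = q.1 * p.1; ring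
    · show _ = q.2 * p.2
      rw [hp2, hq2, key]
  show p * (q.1, Rc q.1 (Rc (star p.1) x *ᵥ y)) = q * p
  rw [show p * (q.1, Rc q.1 (Rc (star p.1) x *ᵥ y))
      = (p.1 * q.1, p.2 * Rc q.1 (Rc (star p.1) x *ᵥ y)) from rfl, hp2]
  exact this

lemma TT_comm (a b : ℕ) : Commute (TT n a) (TT n b) := by
  rcases le_total a b with h | h
  · exact le_antisymm (TT_sub₁ h) (TT_sub₂ h)
  · exact le_antisymm (TT_sub₂ h) (TT_sub₁ h)

lemma FF_one : FF n 1 = 1 := by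
  have : (1 : Set (ℂ × Matrix (Fin n) (Fin n) ℂ)) = {1} := rfl
  rw [FF, this, Set.image_singleton]
  show ({Rc (star (1:ℂ)) (e1 n) * 1} : Set (Matrix (Fin n) (Fin n) ℂ)) = 1
  rw [star_one, Rc_one, mul_one]
  rfl

lemma FF_mul (hn : 1 ≤ n) {S S' : Set (ℂ × Matrix (Fin n) (Fin n) ℂ)}
    (hS : GoodS n S) (hS' : GoodS n S') :
    FF n S * FF n S' = FF n (S * S') := by
  have he1 := e1_unit (n := n) hn
  apply Set.Subset.antisymm
  · rintro M ⟨M1, ⟨p, hp, rfl⟩, M2, ⟨q, hq, rfl⟩, rfl⟩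
    have hd : q.1 * star q.1 = 1 := hS'.1 q hq
    have hmem : ((p.1, Rc q.1 (e1 n) * p.2 * Rc (star q.1) (e1 n)) :
        ℂ × Matrix (Fin n) (Fin n) ℂ) ∈ S := hS.2 q.1 hd p hp
    refine ⟨(p.1 * q.1, (Rc q.1 (e1 n) * p.2 * Rc (star q.1) (e1 n)) * q.2),
      Set.mul_mem_mul hmem hq, ?_⟩
    show Rc (star (p.1 * q.1)) (e1 n) * _ = _
    rw [star_mul', ← Rc_mul_same he1 (star p.1) (star q.1)]
    have h1 : Rc (star q.1) (e1 n) * Rc q.1 (e1 n) = 1 := by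
      rw [Rc_mul_same he1, mul_comm, hd, Rc_one]
    simp only [mul_assoc]
    rw [← mul_assoc (Rc (star q.1) (e1 n)) (Rc q.1 (e1 n)), h1, one_mul]
  · rintro M ⟨p, ⟨u, hu, v, hv, rfl⟩, rfl⟩
    have hd : v.1 * star v.1 = 1 := hS'.1 v hv
    have hd' : star v.1 * star (star v.1) = 1 := by rw [star_star, mul_comm]; exact hd
    have hmem : ((u.1, Rc (star v.1) (e1 n) * u.2 * Rc v.1 (e1 n)) :
        ℂ × Matrix (Fin n) (Fin n) ℂ) ∈ S := by
      have := hS.2 (star v.1) hd' u hu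
      rwa [star_star] at this
    refine ⟨Rc (star u.1) (e1 n) * (Rc (star v.1) (e1 n) * u.2 * Rc v.1 (e1 n)),
      ⟨(u.1, Rc (star v.1) (e1 n) * u.2 * Rc v.1 (e1 n)), hmem, rfl⟩,
      Rc (star v.1) (e1 n) * v.2, ⟨v, hv, rfl⟩, ?_⟩
    show _ = Rc (star ((u * v).1)) (e1 n) * (u * v).2
    have h1 : Rc v.1 (e1 n) * Rc (star v.1) (e1 n) = 1 := by
      rw [Rc_mul_same he1, hd, Rc_one]
    show _ = Rc (star (u.1 * v.1)) (e1 n) * (u.2 * v.2)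
    rw [star_mul', ← Rc_mul_same he1 (star u.1) (star v.1)]
    simp only [mul_assoc]
    rw [← mul_assoc (Rc v.1 (e1 n)) (Rc (star v.1) (e1 n)), h1, one_mul]

lemma GoodS_listprod (hn : 1 ≤ n)
    (hone : GoodS n 1)
    (hmul : ∀ {S S' : Set (ℂ × Matrix (Fin n) (Fin n) ℂ)},
      GoodS n S → GoodS n S' → GoodS n (S * S'))
    (L : List (Set (ℂ × Matrix (Fin n) (Fin n) ℂ))) (hL : ∀ S ∈ L, GoodS n S) :
    GoodS n L.prod := by
  induction L with
  | nil => exact hone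
  | cons S L ih =>
    rw [List.prod_cons]
    exact hmul (hL S (by simp)) (ih (fun S' hS' => hL S' (by simp [hS'])))

lemma FF_listprod (hn : 1 ≤ n)
    (hone : GoodS n 1)
    (hmul : ∀ {S S' : Set (ℂ × Matrix (Fin n) (Fin n) ℂ)},
      GoodS n S → GoodS n S' → GoodS n (S * S'))
    (L : List (Set (ℂ × Matrix (Fin n) (Fin n) ℂ))) (hL : ∀ S ∈ L, GoodS n S) :
    FF n L.prod = (L.map (FF n)).prod := by
  induction L with
  | nil => simpa using FF_one
  | cons S L ih =>
    rw [List.prod_cons, List.map_cons, List.prod_cons,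
      ← FF_mul hn (hL S (by simp)) (GoodS_listprod hn hone hmul L (fun S' h => hL S' (by simp [h]))),
      ih (fun S' h => hL S' (by simp [h]))]

lemma prod_ofFn_pair {M₁ M₂ : Type*} [Monoid M₁] [Monoid M₂] :
    ∀ {r : ℕ} (a : Fin r → M₁) (b : Fin r → M₂),
    (List.ofFn fun j => ((a j, b j) : M₁ × M₂)).prod
      = ((List.ofFn a).prod, (List.ofFn b).prod) := by
  intro r
  induction r with
  | zero => intro a b; simp; rfl
  | succ r ih =>
    intro a b
    rw [List.ofFn_succ, List.ofFn_succ (f := a), List.ofFn_succ (f := b),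
      List.prod_cons, List.prod_cons, List.prod_cons, ih, Prod.mk_mul_mk]

lemma prefactor (r : ℕ) (θ : Fin r → ℝ) :
    pseudoRot (-(∑ j, θ j)) (e1 n)
      = Rc (star ((List.ofFn fun j => cexp (θ j * I)).prod)) (e1 n) := by
  rw [pseudoRot_eq]
  congr 1
  rw [List.prod_ofFn, ← Complex.exp_sum, ← starRingEnd_apply, ← Complex.exp_conj]
  congr 1
  rw [map_sum]
  push_cast
  simp only [_root_.map_mul, Complex.conj_ofReal, Complex.conj_I]
  rw [← Finset.sum_mul]
  ring

lemma LA {r : ℕ} (m : Fin r → ℕ) :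
    schubertSet n m = FF n ((List.ofFn fun j => TT n (m j)).prod) := by
  ext M
  constructor
  · rintro ⟨θ, x, hcond, rfl⟩
    refine ⟨((List.ofFn fun j => cexp (θ j * I)).prod,
      (List.ofFn fun j => Rc (cexp (θ j * I)) (x j)).prod), ?_, ?_⟩
    · rw [Set.mem_prod_list_ofFn]
      refine ⟨fun j => ⟨(cexp (θ j * I), Rc (cexp (θ j * I)) (x j)),
        unit_exp (θ j), x j, (hcond j).1, (hcond j).2, rfl⟩, ?_⟩
      exact prod_ofFn_pair _ _
    · show Rc (star _) (e1 n) * _ = _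
      rw [← prefactor]
      rfl
  · rintro ⟨p, hp, rfl⟩
    rw [Set.mem_prod_list_ofFn] at hp
    obtain ⟨f, hf⟩ := hp
    have hx : ∀ j, ∃ x : Fin n → ℂ, star x ⬝ᵥ x = 1 ∧
        (∀ i : Fin n, m j ≤ (i : ℕ) → x i = 0) ∧ ((f j : ℂ × Matrix (Fin n) (Fin n) ℂ)).2
          = Rc ((f j : ℂ × Matrix (Fin n) (Fin n) ℂ)).1 x := fun j => (f j).2.2
    choose xx hxx1 hxx2 hxx3 using hx
    set θ : Fin r → ℝ := fun j => Complex.arg ((f j : ℂ × Matrix (Fin n) (Fin n) ℂ)).1 with hθ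
    have hexp : ∀ j, cexp (θ j * I) = ((f j : ℂ × Matrix (Fin n) (Fin n) ℂ)).1 :=
      fun j => exp_arg (f j).2.1
    refine ⟨θ, xx, fun j => ⟨hxx1 j, hxx2 j⟩, ?_⟩
    have hlist : (List.ofFn fun j => pseudoRot (θ j) (xx j))
        = List.ofFn fun j => ((f j : ℂ × Matrix (Fin n) (Fin n) ℂ)).2 := by
      apply congrArg List.ofFn
      funext j
      rw [pseudoRot_eq, hexp j, ← hxx3 j]
    rw [hlist, prefactor]
    have hp2 : p = ((List.ofFn fun j => ((f j : ℂ × Matrix (Fin n) (Fin n) ℂ)).1).prod,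
        (List.ofFn fun j => ((f j : ℂ × Matrix (Fin n) (Fin n) ℂ)).2).prod) := by
      rw [← hf, ← prod_ofFn_pair]
    have hc : (List.ofFn fun j => cexp (θ j * I)).prod
        = (List.ofFn fun j => ((f j : ℂ × Matrix (Fin n) (Fin n) ℂ)).1).prod := by
      apply congrArg List.prod
      apply congrArg List.ofFn
      funext j
      exact hexp j
    rw [hc, hp2]

lemma schubert_empty (m : Fin 0 → ℕ) : schubertSet n m = 1 := by
  ext M
  constructor
  · rintro ⟨θ, x, _, rfl⟩
    have h0 : (∑ j : Fin 0, θ j) = 0 := by simp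
    rw [Set.mem_one, h0, neg_zero, List.ofFn_zero, List.prod_nil, mul_one, pseudoRot_eq]
    rw [show ((0:ℝ):ℂ) * I = 0 by push_cast; ring, Complex.exp_zero, Rc_one]
  · intro hM
    rw [Set.mem_one] at hM
    subst hM
    refine ⟨fun j => 0, fun j => j.elim0, fun j => j.elim0, ?_⟩
    have h0 : (∑ j : Fin 0, (0:ℝ)) = 0 := by simp
    rw [h0, neg_zero, List.ofFn_zero, List.prod_nil, mul_one, pseudoRot_eq]
    rw [show ((0:ℝ):ℂ) * I = 0 by push_cast; ring, Complex.exp_zero, Rc_one]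

lemma schubert_single (a : ℕ) : schubertSet n ![a] = FF n (TT n a) := by
  rw [LA]
  congr 1
  rw [List.ofFn_succ, List.ofFn_zero, List.prod_cons, List.prod_nil, mul_one,
    Matrix.cons_val_zero]



lemma hmap {k : ℕ} (mm : Fin k → ℕ) :
    (List.ofFn fun j => TT n (mm j)) = (List.ofFn mm).map (TT n) := by
  rw [List.map_ofFn]; rfl

lemma pairwise_TT (L : List ℕ) : (L.map (TT n)).Pairwise Commute := by
  rw [List.pairwise_map]
  induction L with
  | nil => constructor
  | cons a L ih => rw [List.pairwise_cons]; exact ⟨fun b _ => TT_comm a b, ih⟩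

lemma goodL (hn : 1 ≤ n) (L : List ℕ) (hL : ∀ a ∈ L, 1 ≤ a) :
    GoodS n ((L.map (TT n)).prod) := by
  apply GoodS_listprod hn (GoodS_one hn) (fun h1 h2 => GoodS_mul hn h1 h2)
  intro S hS
  rw [List.mem_map] at hS
  obtain ⟨a, ha, rfl⟩ := hS
  exact GoodS_TT (hL a ha)

end SchubAux

open SchubAux in
theorem stmt19 (n : ℕ) :
    (∀ (r : ℕ) (m : Fin r → ℕ), StrictMono m → (∀ j, 1 < m j ∧ m j ≤ n) →
      schubertSet n m = (List.ofFn fun j : Fin r => schubertSet n ![m j]).prod) ∧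
    (∀ (r r' : ℕ) (m : Fin r → ℕ) (m' : Fin r' → ℕ) (m'' : Fin (r + r') → ℕ),
      StrictMono m → (∀ j, 1 < m j ∧ m j ≤ n) →
      StrictMono m' → (∀ j, 1 < m' j ∧ m' j ≤ n) →
      Set.range m ∩ Set.range m' = ∅ →
      StrictMono m'' → Set.range m'' = Set.range m ∪ Set.range m' →
      schubertSet n m * schubertSet n m' = schubertSet n m'') := by
  constructor
  · intro r m hmono h
    cases r with
    | zero => rw [schubert_empty m, List.ofFn_zero, List.prod_nil]
    | succ r' =>
      have h0 := h 0
      have hn : 1 ≤ n := by omega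
      have hL : ∀ a ∈ List.ofFn m, 1 ≤ a := by
        intro a ha
        rw [List.mem_ofFn] at ha
        obtain ⟨j, rfl⟩ := ha
        have := h j
        omega
      have hGood : ∀ S ∈ (List.ofFn m).map (TT n), GoodS n S := by
        intro S hS
        rw [List.mem_map] at hS
        obtain ⟨a, ha, rfl⟩ := hS
        exact GoodS_TT (hL a ha)
      rw [LA m, hmap m,
        FF_listprod hn (GoodS_one hn) (fun h1 h2 => GoodS_mul hn h1 h2) _ hGood,
        List.map_map, List.map_ofFn]
      apply congrArg List.prod
      apply congrArg List.ofFn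
      funext j
      exact (schubert_single (m j)).symm
  · intro r r' m m' m'' hsm hmb hsm' hm'b hdisj hsm'' hrange
    rcases Nat.eq_zero_or_pos (r + r') with h0 | hpos
    · obtain ⟨hr, hr'⟩ : r = 0 ∧ r' = 0 := by omega
      subst hr; subst hr'
      rw [schubert_empty m, schubert_empty m', schubert_empty m'', one_mul]
    · have hn : 1 ≤ n := by
        rcases Nat.eq_zero_or_pos r with hr | hr
        · have := hm'b ⟨0, by omega⟩; omega
        · have := hmb ⟨0, hr⟩; omega
      have h1a : ∀ a ∈ List.ofFn m, 1 ≤ a := by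
        intro a ha; rw [List.mem_ofFn] at ha; obtain ⟨j, rfl⟩ := ha
        have := hmb j; omega
      have h1b : ∀ a ∈ List.ofFn m', 1 ≤ a := by
        intro a ha; rw [List.mem_ofFn] at ha; obtain ⟨j, rfl⟩ := ha
        have := hm'b j; omega
      rw [LA m, LA m', LA m'', hmap m, hmap m', hmap m'',
        FF_mul hn (goodL hn _ h1a) (goodL hn _ h1b)]
      apply congrArg (FF n)
      rw [← List.prod_append, ← List.map_append]
      apply List.Perm.prod_eq'
      · apply List.Perm.map
        have hnod1 : (List.ofFn m ++ List.ofFn m').Nodup := by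
          rw [List.nodup_append]
          refine ⟨List.nodup_ofFn.2 hsm.injective, List.nodup_ofFn.2 hsm'.injective, ?_⟩
          intro a ha b ha' hab; subst hab
          rw [List.mem_ofFn] at ha ha'
          have := Set.eq_empty_iff_forall_notMem.mp hdisj a
          exact this ⟨ha, ha'⟩
        have hnod2 : (List.ofFn m'').Nodup := List.nodup_ofFn.2 hsm''.injective
        rw [List.perm_ext_iff_of_nodup hnod1 hnod2]
        intro a
        rw [List.mem_append, List.mem_ofFn, List.mem_ofFn, List.mem_ofFn,
          ← Set.mem_range, ← Set.mem_range, ← Set.mem_range, hrange,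
          Set.mem_union]
      · exact pairwise_TT _
end
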